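/- arXiv:2103.15549 — 3 statements merged into one kernel-verified Lean document; each statement's English description precedes it below -/
import Mathlib

section
/- Suppose the full SAV conformal Killing system (E1)–(E9) holds. Then the component C₃ is constant, the component C₂ is independent of ρ (so C₂ is a function of t alone), and at least one of the following holds: (a) C₂ is constant, or (b) ∂_ρW(ρ,z) = 2·W(ρ,z)·∂_ρ(γ−ψ)(ρ,z) for all (ρ,z) ∈ ℝ². -/
open Real

/-- Partial derivative with respect to the first variable. -/
noncomputable def pd1 (f : ℝ → ℝ → ℝ) (x y : ℝ) : ℝ := deriv (fun x' => f x' y) x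

/-- Partial derivative with respect to the second variable. -/
noncomputable def pd2 (f : ℝ → ℝ → ℝ) (x y : ℝ) : ℝ := deriv (fun y' => f x y') y

/-- If the full SAV conformal Killing system (E1)–(E9) holds, then
`C₃` is constant, `C₂` is independent of `ρ`, and either `C₂` is constant or
`∂_ρ W = 2 W ∂_ρ(γ − ψ)` everywhere. -/
theorem sav_ckv_C3_const_C2_dichotomy
    (ψ γ ω R : ℝ → ℝ → ℝ) (k : ℝ) (hk : k ≠ 0)
    (C₁ C₂ C₃ C₄ : ℝ → ℝ → ℝ) (Ψ : ℝ → ℝ → ℝ → ℝ)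
    (hψ : ContDiff ℝ (⊤ : ℕ∞) fun p : ℝ × ℝ => ψ p.1 p.2)
    (hγ : ContDiff ℝ (⊤ : ℕ∞) fun p : ℝ × ℝ => γ p.1 p.2)
    (hω : ContDiff ℝ (⊤ : ℕ∞) fun p : ℝ × ℝ => ω p.1 p.2)
    (hR : ContDiff ℝ (⊤ : ℕ∞) fun p : ℝ × ℝ => R p.1 p.2)
    (hC₁ : ContDiff ℝ (⊤ : ℕ∞) fun p : ℝ × ℝ => C₁ p.1 p.2)
    (hC₂ : ContDiff ℝ (⊤ : ℕ∞) fun p : ℝ × ℝ => C₂ p.1 p.2)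
    (hC₃ : ContDiff ℝ (⊤ : ℕ∞) fun p : ℝ × ℝ => C₃ p.1 p.2)
    (hC₄ : ContDiff ℝ (⊤ : ℕ∞) fun p : ℝ × ℝ => C₄ p.1 p.2)
    (W : ℝ → ℝ → ℝ)
    (hW : ∀ ρ z, W ρ z =
      k ^ 2 * (R ρ z) ^ 2 * exp (-(2 * ψ ρ z)) - (ω ρ z) ^ 2 * exp (2 * ψ ρ z))
    (E1 : ∀ t ρ z, pd1 C₁ t ρ - Ψ t ρ z - ω ρ z * pd1 C₄ t ρ
      + pd1 ψ ρ z * C₂ t ρ + pd2 ψ ρ z * C₃ t ρ = 0)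
    (E2 : ∀ t ρ z, (pd2 C₁ t ρ - ω ρ z * pd2 C₄ t ρ) * exp (2 * ψ ρ z)
      - k ^ 2 * pd1 C₂ t ρ * exp (2 * (γ ρ z - ψ ρ z)) = 0)
    (E3 : ∀ t ρ, pd1 C₃ t ρ = 0)
    (E4 : ∀ t ρ z, W ρ z * pd1 C₄ t ρ
      + (C₂ t ρ * (pd1 ω ρ z + 2 * ω ρ z * pd1 ψ ρ z)
        + C₃ t ρ * (pd2 ω ρ z + 2 * ω ρ z * pd2 ψ ρ z)
        + ω ρ z * (pd1 C₁ t ρ - 2 * Ψ t ρ z)) * exp (2 * ψ ρ z) = 0)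
    (E5 : ∀ t ρ z, pd2 C₂ t ρ
      + C₂ t ρ * pd1 (fun a b => γ a b - ψ a b) ρ z
      + C₃ t ρ * pd2 (fun a b => γ a b - ψ a b) ρ z - Ψ t ρ z = 0)
    (E6 : ∀ t ρ, pd2 C₃ t ρ = 0)
    (E7 : ∀ t ρ z, W ρ z * pd2 C₄ t ρ + ω ρ z * pd2 C₁ t ρ * exp (2 * ψ ρ z) = 0)
    (E8 : ∀ t ρ z, C₃ t ρ * pd2 (fun a b => γ a b - ψ a b) ρ z
      + C₂ t ρ * pd1 (fun a b => γ a b - ψ a b) ρ z - Ψ t ρ z = 0)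
    (E9 : ∀ t ρ z, pd1 W ρ z * C₂ t ρ + pd2 W ρ z * C₃ t ρ - 2 * W ρ z * Ψ t ρ z = 0) :
    (∃ l : ℝ, ∀ t ρ, C₃ t ρ = l) ∧
    (∀ t ρ ρ', C₂ t ρ = C₂ t ρ') ∧
    ((∃ m : ℝ, ∀ t ρ, C₂ t ρ = m) ∨
      (∀ ρ z, pd1 W ρ z = 2 * W ρ z * pd1 (fun a b => γ a b - ψ a b) ρ z)) := by
  have diff1 : ∀ (f : ℝ → ℝ → ℝ), ContDiff ℝ (⊤ : ℕ∞) (fun p : ℝ × ℝ => f p.1 p.2) →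
      ∀ ρ, Differentiable ℝ (fun t => f t ρ) := fun f hf ρ =>
    (hf.differentiable (by simp)).comp (differentiable_id.prodMk (differentiable_const ρ))
  have diff2 : ∀ (f : ℝ → ℝ → ℝ), ContDiff ℝ (⊤ : ℕ∞) (fun p : ℝ × ℝ => f p.1 p.2) →
      ∀ t, Differentiable ℝ (fun ρ => f t ρ) := fun f hf t =>
    (hf.differentiable (by simp)).comp ((differentiable_const t).prodMk differentiable_id)
  have hC3const : ∀ t ρ, C₃ t ρ = C₃ 0 0 := by
    intro t ρ
    have h1 : C₃ t ρ = C₃ 0 ρ :=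
      is_const_of_deriv_eq_zero (diff1 C₃ hC₃ ρ) (fun x => E3 x ρ) t 0
    have h2 : C₃ 0 ρ = C₃ 0 0 :=
      is_const_of_deriv_eq_zero (diff2 C₃ hC₃ 0) (fun x => E6 0 x) ρ 0
    linarith
  have hpd2C2 : ∀ t ρ, pd2 C₂ t ρ = 0 := by
    intro t ρ
    have h5 := E5 t ρ 0
    have h8 := E8 t ρ 0
    linarith
  have hC2ρ : ∀ t ρ ρ', C₂ t ρ = C₂ t ρ' := by
    intro t ρ ρ'
    exact is_const_of_deriv_eq_zero (diff2 C₂ hC₂ t) (fun x => hpd2C2 t x) ρ ρ'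
  refine ⟨⟨C₃ 0 0, hC3const⟩, hC2ρ, ?_⟩
  by_cases h : ∀ t, C₂ t 0 = C₂ 0 0
  · exact Or.inl ⟨C₂ 0 0, fun t ρ => (hC2ρ t ρ 0).trans (h t)⟩
  · right
    push_neg at h
    obtain ⟨t₀, ht₀⟩ := h
    intro ρ z
    have e1 := E9 t₀ ρ z
    have e2 := E9 0 ρ z
    have p1 := E8 t₀ ρ z
    have p2 := E8 0 ρ z
    have hc3 : C₃ t₀ ρ = C₃ 0 ρ := (hC3const t₀ ρ).trans (hC3const 0 ρ).symm
    have hc2a : C₂ t₀ ρ = C₂ t₀ 0 := hC2ρ t₀ ρ 0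
    have hc2b : C₂ 0 ρ = C₂ 0 0 := hC2ρ 0 ρ 0
    have hΨ1 : Ψ t₀ ρ z = C₃ t₀ ρ * pd2 (fun a b => γ a b - ψ a b) ρ z
        + C₂ t₀ ρ * pd1 (fun a b => γ a b - ψ a b) ρ z := by linarith
    have hΨ2 : Ψ 0 ρ z = C₃ 0 ρ * pd2 (fun a b => γ a b - ψ a b) ρ z
        + C₂ 0 ρ * pd1 (fun a b => γ a b - ψ a b) ρ z := by linarith
    have key : (C₂ t₀ 0 - C₂ 0 0) *
        (pd1 W ρ z - 2 * W ρ z * pd1 (fun a b => γ a b - ψ a b) ρ z) = 0 := by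
      rw [← hc2a, ← hc2b]
      linear_combination e1 - e2 + 2 * W ρ z * hΨ1 - 2 * W ρ z * hΨ2
        + (2 * W ρ z * pd2 (fun a b => γ a b - ψ a b) ρ z - pd2 W ρ z) * hc3
    rcases mul_eq_zero.1 key with h' | h'
    · exact absurd (sub_eq_zero.1 h') ht₀
    · linarith
end

section
/- Suppose the SAV conformal Killing system (E1)–(E9) holds with C₂ ≡ 0 and C₃ ≡ 0, and suppose W(ρ,z) + ω(ρ,z)²e^{2ψ(ρ,z)} ≠ 0 for all (ρ,z). Then the conformal factor Ψ is identically zero and the components C₁ and C₄ are constant; that is, the vector field is a Killing vector of the form η = π₂∂ₜ + a₁∂_φ for constants π₂, a₁. -/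
open Real

/-- If the SAV conformal Killing system (E1)–(E9) holds with
`C₂ ≡ 0` and `C₃ ≡ 0`, and the nondegeneracy factor `W + ω²e^{2ψ}` never
vanishes, then `Ψ ≡ 0` and `C₁`, `C₄` are constants: the vector field is a
Killing vector `η = π₂ ∂ₜ + a₁ ∂_φ`. -/
theorem sav_ckv_trivial_case_is_KV
    (ψ γ ω R : ℝ → ℝ → ℝ) (k : ℝ) (hk : k ≠ 0)
    (C₁ C₂ C₃ C₄ : ℝ → ℝ → ℝ) (Ψ : ℝ → ℝ → ℝ → ℝ)
    (hψ : ContDiff ℝ (⊤ : ℕ∞) fun p : ℝ × ℝ => ψ p.1 p.2)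
    (hγ : ContDiff ℝ (⊤ : ℕ∞) fun p : ℝ × ℝ => γ p.1 p.2)
    (hω : ContDiff ℝ (⊤ : ℕ∞) fun p : ℝ × ℝ => ω p.1 p.2)
    (hR : ContDiff ℝ (⊤ : ℕ∞) fun p : ℝ × ℝ => R p.1 p.2)
    (hC₁ : ContDiff ℝ (⊤ : ℕ∞) fun p : ℝ × ℝ => C₁ p.1 p.2)
    (hC₂s : ContDiff ℝ (⊤ : ℕ∞) fun p : ℝ × ℝ => C₂ p.1 p.2)
    (hC₃s : ContDiff ℝ (⊤ : ℕ∞) fun p : ℝ × ℝ => C₃ p.1 p.2)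
    (hC₄ : ContDiff ℝ (⊤ : ℕ∞) fun p : ℝ × ℝ => C₄ p.1 p.2)
    (W : ℝ → ℝ → ℝ)
    (hW : ∀ ρ z, W ρ z =
      k ^ 2 * (R ρ z) ^ 2 * exp (-(2 * ψ ρ z)) - (ω ρ z) ^ 2 * exp (2 * ψ ρ z))
    (hC₂ : ∀ t ρ, C₂ t ρ = 0)
    (hC₃ : ∀ t ρ, C₃ t ρ = 0)
    (hnd : ∀ ρ z, W ρ z + (ω ρ z) ^ 2 * exp (2 * ψ ρ z) ≠ 0)
    (E1 : ∀ t ρ z, pd1 C₁ t ρ - Ψ t ρ z - ω ρ z * pd1 C₄ t ρ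
      + pd1 ψ ρ z * C₂ t ρ + pd2 ψ ρ z * C₃ t ρ = 0)
    (E2 : ∀ t ρ z, (pd2 C₁ t ρ - ω ρ z * pd2 C₄ t ρ) * exp (2 * ψ ρ z)
      - k ^ 2 * pd1 C₂ t ρ * exp (2 * (γ ρ z - ψ ρ z)) = 0)
    (E3 : ∀ t ρ, pd1 C₃ t ρ = 0)
    (E4 : ∀ t ρ z, W ρ z * pd1 C₄ t ρ
      + (C₂ t ρ * (pd1 ω ρ z + 2 * ω ρ z * pd1 ψ ρ z)
        + C₃ t ρ * (pd2 ω ρ z + 2 * ω ρ z * pd2 ψ ρ z)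
        + ω ρ z * (pd1 C₁ t ρ - 2 * Ψ t ρ z)) * exp (2 * ψ ρ z) = 0)
    (E5 : ∀ t ρ z, pd2 C₂ t ρ
      + C₂ t ρ * pd1 (fun a b => γ a b - ψ a b) ρ z
      + C₃ t ρ * pd2 (fun a b => γ a b - ψ a b) ρ z - Ψ t ρ z = 0)
    (E6 : ∀ t ρ, pd2 C₃ t ρ = 0)
    (E7 : ∀ t ρ z, W ρ z * pd2 C₄ t ρ + ω ρ z * pd2 C₁ t ρ * exp (2 * ψ ρ z) = 0)
    (E8 : ∀ t ρ z, C₃ t ρ * pd2 (fun a b => γ a b - ψ a b) ρ z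
      + C₂ t ρ * pd1 (fun a b => γ a b - ψ a b) ρ z - Ψ t ρ z = 0)
    (E9 : ∀ t ρ z, pd1 W ρ z * C₂ t ρ + pd2 W ρ z * C₃ t ρ - 2 * W ρ z * Ψ t ρ z = 0) :
    (∀ t ρ z, Ψ t ρ z = 0) ∧
    (∃ π₂ a₁ : ℝ, ∀ t ρ, C₁ t ρ = π₂ ∧ C₄ t ρ = a₁) := by
  -- Ψ ≡ 0 from E8
  have hΨ : ∀ t ρ z, Ψ t ρ z = 0 := by
    intro t ρ z
    have := E8 t ρ z
    rw [hC₂, hC₃] at this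
    linarith
  -- derivatives of C₂ vanish
  have hpd1C₂ : ∀ t ρ, pd1 C₂ t ρ = 0 := by
    intro t ρ
    have : (fun t' => C₂ t' ρ) = fun _ => (0:ℝ) := funext fun t' => hC₂ t' ρ
    simp [pd1, this]
  -- pd1 C₄ = 0
  have h4t : ∀ t ρ, pd1 C₄ t ρ = 0 := by
    intro t ρ
    have e1 := E1 t ρ 0
    rw [hC₂, hC₃, hΨ] at e1
    have e4 := E4 t ρ 0
    rw [hC₂, hC₃, hΨ] at e4
    have h1 : pd1 C₁ t ρ = ω ρ 0 * pd1 C₄ t ρ := by linarith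
    have key : (W ρ 0 + (ω ρ 0) ^ 2 * exp (2 * ψ ρ 0)) * pd1 C₄ t ρ = 0 := by
      rw [h1] at e4; ring_nf at e4 ⊢; linarith
    exact (mul_eq_zero.mp key).resolve_left (hnd ρ 0)
  have h1t : ∀ t ρ, pd1 C₁ t ρ = 0 := by
    intro t ρ
    have e1 := E1 t ρ 0
    rw [hC₂, hC₃, hΨ, h4t] at e1
    linarith
  -- pd2 C₄ = 0
  have h4r : ∀ t ρ, pd2 C₄ t ρ = 0 := by
    intro t ρ
    have e2 := E2 t ρ 0
    rw [hpd1C₂] at e2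
    have hex := (exp_pos (2 * ψ ρ 0)).ne'
    have h1 : pd2 C₁ t ρ = ω ρ 0 * pd2 C₄ t ρ := by
      have : (pd2 C₁ t ρ - ω ρ 0 * pd2 C₄ t ρ) * exp (2 * ψ ρ 0) = 0 := by linarith
      have := (mul_eq_zero.mp this).resolve_right hex
      linarith
    have e7 := E7 t ρ 0
    rw [h1] at e7
    have key : (W ρ 0 + (ω ρ 0) ^ 2 * exp (2 * ψ ρ 0)) * pd2 C₄ t ρ = 0 := by
      ring_nf at e7 ⊢; linarith
    exact (mul_eq_zero.mp key).resolve_left (hnd ρ 0)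
  have h1r : ∀ t ρ, pd2 C₁ t ρ = 0 := by
    intro t ρ
    have e7 := E7 t ρ 0
    rw [h4r] at e7
    have hex := (exp_pos (2 * ψ ρ 0)).ne'
    rcases mul_eq_zero.mp (by linarith : ω ρ 0 * pd2 C₁ t ρ * exp (2 * ψ ρ 0) = 0) with h | h
    · rcases mul_eq_zero.mp h with h' | h'
      ·
        -- From E2 directly: pd2 C₁ * exp = ω * pd2C₄ * exp = 0
        have e2 := E2 t ρ 0
        rw [hpd1C₂, h4r] at e2
        have : pd2 C₁ t ρ * exp (2 * ψ ρ 0) = 0 := by ring_nf at e2 ⊢; linarith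
        exact (mul_eq_zero.mp this).resolve_right hex
      · exact h'
    · exact absurd h hex
  -- constancy
  refine ⟨hΨ, C₁ 0 0, C₄ 0 0, fun t ρ => ?_⟩
  have dC₁ := hC₁.differentiable (by simp)
  have dC₄ := hC₄.differentiable (by simp)
  have dline1 : ∀ ρ, Differentiable ℝ fun t' => C₁ t' ρ := fun ρ =>
    (dC₁.comp (differentiable_id.prodMk (differentiable_const ρ)) : _)
  have dline2 : ∀ t, Differentiable ℝ fun ρ' => C₁ t ρ' := fun t =>
    (dC₁.comp ((differentiable_const t).prodMk differentiable_id) : _)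
  have dline3 : ∀ ρ, Differentiable ℝ fun t' => C₄ t' ρ := fun ρ =>
    (dC₄.comp (differentiable_id.prodMk (differentiable_const ρ)) : _)
  have dline4 : ∀ t, Differentiable ℝ fun ρ' => C₄ t ρ' := fun t =>
    (dC₄.comp ((differentiable_const t).prodMk differentiable_id) : _)
  have c1 : C₁ t ρ = C₁ 0 0 := by
    have step1 : C₁ t ρ = C₁ 0 ρ :=
      is_const_of_deriv_eq_zero (dline1 ρ) (fun x => h1t x ρ) t 0
    have step2 : C₁ 0 ρ = C₁ 0 0 :=
      is_const_of_deriv_eq_zero (dline2 0) (fun x => h1r 0 x) ρ 0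
    rw [step1, step2]
  have c4 : C₄ t ρ = C₄ 0 0 := by
    have step1 : C₄ t ρ = C₄ 0 ρ :=
      is_const_of_deriv_eq_zero (dline3 ρ) (fun x => h4t x ρ) t 0
    have step2 : C₄ 0 ρ = C₄ 0 0 :=
      is_const_of_deriv_eq_zero (dline4 0) (fun x => h4r 0 x) ρ 0
    rw [step1, step2]
  exact ⟨c1, c4⟩
end

section
/- Let U ⊆ (0,∞) × ℝ be open and connected, and let ψ, γ : U → ℝ be continuously differentiable with γ − 2ψ constant on U and ∂_zψ ≡ 0 on U. If the vacuum field equation ρ·((∂_ρψ)² − (∂_zψ)²) = ∂_ργ holds on U, then either ψ is constant on U, or there is a constant d₁ with ψ(ρ,z) = 2 ln ρ + d₁ on U (in which case γ(ρ,z) = 4 ln ρ + d₂ for a constant d₂). -/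
open Real

section PartialDerivatives

variable {f : ℝ → ℝ → ℝ} {p : ℝ × ℝ}

theorem hasDerivAt_pd1 (hf : DifferentiableAt ℝ (fun q : ℝ × ℝ => f q.1 q.2) p) :
    HasDerivAt (fun x => f x p.2) (fderiv ℝ (fun q : ℝ × ℝ => f q.1 q.2) p (1, 0)) p.1 :=
  hf.hasFDerivAt.comp_hasDerivAt (f := fun x => (x, p.2)) p.1
    ((hasDerivAt_id p.1).prodMk (hasDerivAt_const p.1 p.2))

theorem hasDerivAt_pd2 (hf : DifferentiableAt ℝ (fun q : ℝ × ℝ => f q.1 q.2) p) :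
    HasDerivAt (fun y => f p.1 y) (fderiv ℝ (fun q : ℝ × ℝ => f q.1 q.2) p (0, 1)) p.2 :=
  hf.hasFDerivAt.comp_hasDerivAt (f := fun y => (p.1, y)) p.2
    ((hasDerivAt_const p.2 p.1).prodMk (hasDerivAt_id p.2))

theorem pd1_eq_fderiv (hf : DifferentiableAt ℝ (fun q : ℝ × ℝ => f q.1 q.2) p) :
    pd1 f p.1 p.2 = fderiv ℝ (fun q : ℝ × ℝ => f q.1 q.2) p (1, 0) :=
  (hasDerivAt_pd1 hf).deriv

theorem fderiv_eq_zero_of_pd1_of_pd2 (hf : DifferentiableAt ℝ (fun q : ℝ × ℝ => f q.1 q.2) p)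
    (h1 : pd1 f p.1 p.2 = 0) (h2 : pd2 f p.1 p.2 = 0) :
    fderiv ℝ (fun q : ℝ × ℝ => f q.1 q.2) p = 0 := by
  rw [pd1_eq_fderiv hf] at h1
  rw [pd2, (hasDerivAt_pd2 hf).deriv] at h2
  ext
  · simpa using h1
  · simpa using h2

theorem pd1_sub_const_mul_log (hf : DifferentiableAt ℝ (fun x => f x p.2) p.1) (hx : p.1 ≠ 0)
    (a : ℝ) : pd1 (fun x y => f x y - a * log x) p.1 p.2 = pd1 f p.1 p.2 - a / p.1 := by
  rw [pd1, pd1, div_eq_mul_inv]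
  exact (hf.hasDerivAt.sub ((hasDerivAt_log hx).const_mul a)).deriv

theorem pd2_sub_fst_fun (k : ℝ → ℝ) :
    pd2 (fun x y => f x y - k x) p.1 p.2 = pd2 f p.1 p.2 :=
  deriv_sub_const _

end PartialDerivatives

section OpenSet

variable {U : Set (ℝ × ℝ)} {f : ℝ → ℝ → ℝ}

theorem continuousOn_pd1 (hU : IsOpen U) (hf : ContDiffOn ℝ 1 (fun q : ℝ × ℝ => f q.1 q.2) U) :
    ContinuousOn (fun p : ℝ × ℝ => pd1 f p.1 p.2) U := by
  have hfd := (ContinuousLinearMap.apply ℝ ℝ ((1 : ℝ), (0 : ℝ))).continuous.comp_continuousOn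
    (hf.continuousOn_fderiv_of_isOpen hU le_rfl)
  refine hfd.congr fun p hp => pd1_eq_fderiv ?_
  exact (hf.differentiableOn one_ne_zero).differentiableAt (hU.mem_nhds hp)

theorem exists_const_of_pd1_of_pd2 (hU : IsOpen U) (hconn : IsPreconnected U)
    (hf : DifferentiableOn ℝ (fun q : ℝ × ℝ => f q.1 q.2) U)
    (h1 : ∀ p ∈ U, pd1 f p.1 p.2 = 0) (h2 : ∀ p ∈ U, pd2 f p.1 p.2 = 0) :
    ∃ c, ∀ p ∈ U, f p.1 p.2 = c :=
  hU.exists_is_const_of_fderiv_eq_zero hconn hf fun p hp =>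
    fderiv_eq_zero_of_pd1_of_pd2 (hf.differentiableAt (hU.mem_nhds hp)) (h1 p hp) (h2 p hp)

theorem pd1_eq_const_mul_pd1_of_sub_const_mul_eq {g : ℝ → ℝ → ℝ} {a c : ℝ} (hU : IsOpen U)
    (h : ∀ p ∈ U, g p.1 p.2 - a * f p.1 p.2 = c) :
    ∀ p ∈ U, pd1 g p.1 p.2 = a * pd1 f p.1 p.2 := by
  intro p hp
  have hslice : ∀ᶠ x in nhds p.1, (x, p.2) ∈ U :=
    (continuous_id.prodMk continuous_const).continuousAt.preimage_mem_nhds (hU.mem_nhds hp)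
  have hg : (fun x => g x p.2) =ᶠ[nhds p.1] fun x => a * f x p.2 + c := by
    filter_upwards [hslice] with x hx
    linarith [h _ hx]
  rw [pd1, hg.deriv_eq, deriv_add_const, deriv_const_mul_field, pd1]

theorem exists_eq_const_mul_log_add (hU : IsOpen U) (hconn : IsPreconnected U)
    (hUpos : ∀ p ∈ U, 0 < p.1) (hf : DifferentiableOn ℝ (fun q : ℝ × ℝ => f q.1 q.2) U) {a : ℝ}
    (h1 : ∀ p ∈ U, p.1 * pd1 f p.1 p.2 = a) (h2 : ∀ p ∈ U, pd2 f p.1 p.2 = 0) :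
    ∃ d, ∀ p ∈ U, f p.1 p.2 = a * log p.1 + d := by
  have hlog : ∀ p ∈ U, pd1 (fun x y => f x y - a * log x) p.1 p.2 = 0 := by
    intro p hp
    have hx := (hUpos p hp).ne'
    have hslice := (hasDerivAt_pd1 (hf.differentiableAt (hU.mem_nhds hp))).differentiableAt
    rw [pd1_sub_const_mul_log hslice hx, sub_eq_zero, eq_div_iff hx, mul_comm]
    exact h1 p hp
  obtain ⟨d, hd⟩ := exists_const_of_pd1_of_pd2 hU hconn
    (hf.sub ((differentiableOn_log.comp differentiableOn_fst
      fun p hp => (hUpos p hp).ne').const_mul a))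
    hlog (fun p hp => (pd2_sub_fst_fun _).trans (h2 p hp))
  exact ⟨d, fun p hp => eq_add_of_sub_eq' (hd p hp)⟩

end OpenSet

theorem mul_mem_zero_two_of_mul_sq_eq_two_mul {ρ g : ℝ} (h : ρ * g ^ 2 = 2 * g) :
    ρ * g ∈ ({0, 2} : Set ℝ) := by
  have hfactor : g * (ρ * g - 2) = 0 := by linear_combination h
  rcases mul_eq_zero.mp hfactor with h0 | h2
  · simp [h0]
  · simp [sub_eq_zero.mp h2]

theorem twist_free_vacuum_psi_classification_general
    (U : Set (ℝ × ℝ)) (hU : IsOpen U) (hconn : IsConnected U)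
    (hUsub : ∀ p ∈ U, 0 < p.1)
    (ψ γ : ℝ → ℝ → ℝ)
    (hψ : ContDiffOn ℝ 1 (fun q : ℝ × ℝ => ψ q.1 q.2) U)
    (hconst : ∃ c : ℝ, ∀ p ∈ U, γ p.1 p.2 - 2 * ψ p.1 p.2 = c)
    (hz : ∀ p ∈ U, pd2 ψ p.1 p.2 = 0)
    (hvac : ∀ p ∈ U, p.1 * ((pd1 ψ p.1 p.2) ^ 2 - (pd2 ψ p.1 p.2) ^ 2)
      = pd1 γ p.1 p.2) :
    (∃ c : ℝ, ∀ p ∈ U, ψ p.1 p.2 = c) ∨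
    (∃ d₁ d₂ : ℝ, ∀ p ∈ U, ψ p.1 p.2 = 2 * Real.log p.1 + d₁ ∧
      γ p.1 p.2 = 4 * Real.log p.1 + d₂) := by
  obtain ⟨c, hc⟩ := hconst
  obtain ⟨p₀, hp₀⟩ := hconn.nonempty
  have hγ := pd1_eq_const_mul_pd1_of_sub_const_mul_eq hU hc
  have hmaps : Set.MapsTo (fun p : ℝ × ℝ => p.1 * pd1 ψ p.1 p.2) U {0, 2} := by
    intro p hp
    apply mul_mem_zero_two_of_mul_sq_eq_two_mul
    simpa [hz p hp, hγ p hp] using hvac p hp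
  have hρψ : ∀ p ∈ U, p.1 * pd1 ψ p.1 p.2 = p₀.1 * pd1 ψ p₀.1 p₀.2 := fun p hp =>
    hconn.isPreconnected.constant_of_mapsTo (Set.toFinite _).isDiscrete
      (continuous_fst.continuousOn.mul (continuousOn_pd1 hU hψ)) hmaps hp hp₀
  obtain ⟨d₁, hd₁⟩ := exists_eq_const_mul_log_add hU hconn.isPreconnected hUsub
    (hψ.differentiableOn one_ne_zero) hρψ hz
  obtain ha | ha : p₀.1 * pd1 ψ p₀.1 p₀.2 = 0 ∨ p₀.1 * pd1 ψ p₀.1 p₀.2 = 2 := hmaps hp₀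
  · left
    exact ⟨d₁, fun p hp => by simpa [ha] using hd₁ p hp⟩
  · right
    rw [ha] at hd₁
    refine ⟨d₁, 2 * d₁ + c, fun p hp => ⟨hd₁ p hp, ?_⟩⟩
    linarith [hd₁ p hp, hc p hp]

/-- On an open connected `U ⊆ (0,∞) × ℝ`, if `ψ, γ` are `C¹`
with `γ − 2ψ` constant, `ψ_{,z} ≡ 0`, and the vacuum equation
`ρ(ψ_{,ρ}² − ψ_{,z}²) = γ_{,ρ}` holds on `U`, then either `ψ` is constant on
`U`, or `ψ = 2 ln ρ + d₁` and `γ = 4 ln ρ + d₂` on `U` for constants `d₁, d₂`. -/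
theorem twist_free_vacuum_psi_classification
    (U : Set (ℝ × ℝ)) (hU : IsOpen U) (hconn : IsConnected U)
    (hUsub : ∀ p ∈ U, 0 < p.1)
    (ψ γ : ℝ → ℝ → ℝ)
    (hψ : ContDiffOn ℝ 1 (fun q : ℝ × ℝ => ψ q.1 q.2) U)
    (hγ : ContDiffOn ℝ 1 (fun q : ℝ × ℝ => γ q.1 q.2) U)
    (hconst : ∃ c : ℝ, ∀ p ∈ U, γ p.1 p.2 - 2 * ψ p.1 p.2 = c)
    (hz : ∀ p ∈ U, pd2 ψ p.1 p.2 = 0)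
    (hvac : ∀ p ∈ U, p.1 * ((pd1 ψ p.1 p.2) ^ 2 - (pd2 ψ p.1 p.2) ^ 2)
      = pd1 γ p.1 p.2) :
    (∃ c : ℝ, ∀ p ∈ U, ψ p.1 p.2 = c) ∨
    (∃ d₁ d₂ : ℝ, ∀ p ∈ U, ψ p.1 p.2 = 2 * Real.log p.1 + d₁ ∧
      γ p.1 p.2 = 4 * Real.log p.1 + d₂) :=
  twist_free_vacuum_psi_classification_general U hU hconn hUsub ψ γ hψ hconst hz hvac
end
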